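/- If k₀ < k_c and H : ℝ^{k₀} → ℝ^{k_c} is Lipschitz, then H is not surjective; consequently (with G_c injective) the cut generator's range strictly contains the uncut generator's range. -/

import Mathlib

open Set Module

section FiniteDimensional

variable {E F : Type*} [NormedAddCommGroup E] [NormedSpace ℝ E] [FiniteDimensional ℝ E]
  [NormedAddCommGroup F] [NormedSpace ℝ F] [FiniteDimensional ℝ F] {K : NNReal} {f : E → F}

theorem LipschitzWith.dense_compl_range_of_finrank_lt_finrank (hf : LipschitzWith K f)
    (hEF : finrank ℝ E < finrank ℝ F) : Dense (range f)ᶜ :=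
  dense_compl_of_dimH_lt_finrank <|
    (hf.dimH_range_le.trans_eq (Real.dimH_univ_eq_finrank E)).trans_lt (Nat.cast_lt.2 hEF)

theorem LipschitzWith.not_surjective_of_finrank_lt_finrank (hf : LipschitzWith K f)
    (hEF : finrank ℝ E < finrank ℝ F) : ¬ Function.Surjective f := fun hsurj =>
  (hf.dense_compl_range_of_finrank_lt_finrank hEF).nonempty.ne_empty <| by
    rw [hsurj.range_eq, compl_univ]

end FiniteDimensional

theorem Function.Injective.range_comp_ssubset_range {α β γ : Type*} {f : α → β} {g : β → γ}
    (hg : g.Injective) (hf : ¬ f.Surjective) : range (g ∘ f) ⊂ range g := by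
  rw [range_comp, ← image_univ (f := g)]
  exact hg.image_strictMono (ssubset_univ_iff.2 (mt range_eq_univ.1 hf))

theorem lipschitz_low_dim_not_surjective
    (k₀ kc n : ℕ) (hk : k₀ < kc) (L : NNReal)
    (H : EuclideanSpace ℝ (Fin k₀) → EuclideanSpace ℝ (Fin kc))
    (hH : LipschitzWith L H)
    (G₀ : EuclideanSpace ℝ (Fin k₀) → EuclideanSpace ℝ (Fin n))
    (Gc : EuclideanSpace ℝ (Fin kc) → EuclideanSpace ℝ (Fin n))
    (hcomp : G₀ = Gc ∘ H)
    (hGc : Function.Injective Gc) :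
    ¬ Function.Surjective H ∧ Set.range G₀ ⊂ Set.range Gc := by
  have hH_not_surj : ¬ Function.Surjective H :=
    hH.not_surjective_of_finrank_lt_finrank (by simpa only [finrank_euclideanSpace_fin] using hk)
  exact ⟨hH_not_surj, hcomp ▸ hGc.range_comp_ssubset_range hH_not_surj⟩
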